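/- arXiv:2108.04793 — 7 statements merged into one kernel-verified Lean document; each statement's English description precedes it below -/
import Mathlib

section
/- If A is a p-limited subset of a Banach space X (1 ≤ p < ∞), then for every bounded linear operator T : X → ℓ_p, the image T(A) is relatively compact in ℓ_p. -/
open Filter Topology Metric

noncomputable section

/-- The sequence space `ℓ_p` over `ℝ`. -/
abbrev lpS (p : ENNReal) : Type := lp (fun _ : ℕ => ℝ) p

variable {W X Y Z : Type*}

/-- A set `A ⊆ X` is coarse `p`-limited if every bounded operator `T : X → ℓ_p`
maps `A` to a relatively compact subset of `ℓ_p`. -/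
def CoarsePLimited (p : ENNReal) [Fact (1 ≤ p)]
    [NormedAddCommGroup X] [NormedSpace ℝ X] (A : Set X) : Prop :=
  ∀ T : X →L[ℝ] lpS p, IsCompact (closure (T '' A))

/-- A sequence is weakly null if every continuous functional sends it to a null sequence. -/
def WeaklyNull [NormedAddCommGroup X] [NormedSpace ℝ X] (x : ℕ → X) : Prop :=
  ∀ f : X →L[ℝ] ℝ, Tendsto (fun n => f (x n)) atTop (𝓝 0)

/-- A sequence is weakly Cauchy if every continuous functional sends it to a Cauchy sequence. -/
def WeaklyCauchy [NormedAddCommGroup X] [NormedSpace ℝ X] (x : ℕ → X) : Prop :=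
  ∀ f : X →L[ℝ] ℝ, CauchySeq (fun n => f (x n))

/-- A set is conditionally weakly compact if every sequence in it has a weakly
Cauchy subsequence. -/
def CondWeaklyCompact [NormedAddCommGroup X] [NormedSpace ℝ X] (A : Set X) : Prop :=
  ∀ x : ℕ → X, (∀ n, x n ∈ A) → ∃ φ : ℕ → ℕ, StrictMono φ ∧ WeaklyCauchy (x ∘ φ)

/-- A set is relatively weakly compact if its closure in the weak topology is compact. -/
def RelWeaklyCompact [NormedAddCommGroup X] [NormedSpace ℝ X] (A : Set X) : Prop :=
  IsCompact (closure ((toWeakSpaceCLM ℝ X) '' A))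

/-- A Banach space has the coarse `p`-DP* property if every relatively weakly compact
subset is coarse `p`-limited. -/
def CoarsePDPstar (p : ENNReal) [Fact (1 ≤ p)] (X : Type*)
    [NormedAddCommGroup X] [NormedSpace ℝ X] : Prop :=
  ∀ A : Set X, RelWeaklyCompact A → CoarsePLimited p A

/-- A Banach space has the coarse `p`-Gelfand-Phillips property if every coarse
`p`-limited subset is relatively compact. -/
def CoarsePGP (p : ENNReal) [Fact (1 ≤ p)] (X : Type*)
    [NormedAddCommGroup X] [NormedSpace ℝ X] : Prop :=
  ∀ A : Set X, CoarsePLimited p A → IsCompact (closure A)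

/-- A set `A` is limited if every weak*-null sequence of functionals converges to `0`
uniformly on `A`. -/
def LimitedSet [NormedAddCommGroup X] [NormedSpace ℝ X] (A : Set X) : Prop :=
  ∀ f : ℕ → (X →L[ℝ] ℝ), (∀ x : X, Tendsto (fun n => f n x) atTop (𝓝 0)) →
    TendstoUniformlyOn (fun n x => f n x) 0 atTop A

/-- A set `A` is `p`-limited if for every weak* `p`-summable sequence `(f n)` of
functionals there is `a ∈ ℓ_p` with `|f n x| ≤ a n` for all `x ∈ A` and all `n`. -/
def PLimitedSet (p : ENNReal) [NormedAddCommGroup X] [NormedSpace ℝ X] (A : Set X) : Prop :=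
  ∀ f : ℕ → (X →L[ℝ] ℝ), (∀ x : X, Memℓp (fun n => f n x) p) →
    ∃ a : ℕ → ℝ, Memℓp a p ∧ ∀ x ∈ A, ∀ n, |f n x| ≤ a n

/-- A sequence of vectors has norm-null if its norms tend to zero. -/
def NormNull [NormedAddCommGroup X] (x : ℕ → X) : Prop :=
  Tendsto (fun n => ‖x n‖) atTop (𝓝 0)

/-- The Schur property: weakly null sequences are norm null. -/
def SchurProp (X : Type*) [NormedAddCommGroup X] [NormedSpace ℝ X] : Prop :=
  ∀ x : ℕ → X, WeaklyNull x → NormNull x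

/-- A coarse `p`-limited operator: the image of the unit ball is coarse `p`-limited. -/
def CoarsePLimOp (p : ENNReal) [Fact (1 ≤ p)] [NormedAddCommGroup X] [NormedSpace ℝ X]
    [NormedAddCommGroup Y] [NormedSpace ℝ Y] (T : X →L[ℝ] Y) : Prop :=
  CoarsePLimited p (T '' closedBall (0 : X) 1)

/-- A weakly compact operator: the image of the unit ball is relatively weakly compact. -/
def WeaklyCompactOp [NormedAddCommGroup X] [NormedSpace ℝ X]
    [NormedAddCommGroup Y] [NormedSpace ℝ Y] (T : X →L[ℝ] Y) : Prop :=
  RelWeaklyCompact (T '' closedBall (0 : X) 1)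

/-- A compact operator: the image of the unit ball is relatively compact. -/
def CompactOp [NormedAddCommGroup X] [NormedSpace ℝ X]
    [NormedAddCommGroup Y] [NormedSpace ℝ Y] (T : X →L[ℝ] Y) : Prop :=
  IsCompact (closure (T '' closedBall (0 : X) 1))

/-- `X` contains an isomorphic copy of `ℓ₁`. -/
def ContainsL1 (X : Type*) [NormedAddCommGroup X] [NormedSpace ℝ X] : Prop :=
  ∃ T : lpS 1 →L[ℝ] X, ∃ c : ℝ, 0 < c ∧ ∀ v : lpS 1, c * ‖v‖ ≤ ‖T v‖

set_option maxHeartbeats 1000000 in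
theorem stmt0 (p : ENNReal) [Fact (1 ≤ p)] (hp : p ≠ ⊤)
    [NormedAddCommGroup X] [NormedSpace ℝ X] [CompleteSpace X]
    (A : Set X) (hA : PLimitedSet p A) :
    ∀ T : X →L[ℝ] lpS p, IsCompact (closure (T '' A)) := by
  classical
  intro T
  have hfact : (1 : ENNReal) ≤ p := Fact.out
  have hp0 : p ≠ 0 := fun h => by simp [h] at hfact
  have hq : 0 < p.toReal := ENNReal.toReal_pos hp0 hp
  obtain ⟨a, ha, haA⟩ := hA (fun n =>
    LinearMap.mkContinuous
      { toFun := fun x => (T x) n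
        map_add' := fun x y => by
          show (T (x + y)) n = (T x) n + (T y) n
          rw [map_add]; rfl
        map_smul' := fun c x => by
          show (T (c • x)) n = c • (T x) n
          rw [map_smul]; rfl }
      ‖T‖ (fun x => (lp.norm_apply_le_norm hp0 (T x) n).trans (T.le_opNorm x)))
    (fun x => lp.memℓp (T x))
  have haA' : ∀ x ∈ A, ∀ n, |(T x) n| ≤ a n := fun x hx n => haA x hx n
  have hsa : Summable fun n => |a n| ^ p.toReal := by
    simpa [Real.norm_eq_abs] using ha.summable hq
  have hg : Summable fun n => (2 * |a n|) ^ p.toReal := by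
    have h2 : ∀ n, (2 * |a n|) ^ p.toReal = 2 ^ p.toReal * |a n| ^ p.toReal := fun n =>
      Real.mul_rpow (by norm_num) (abs_nonneg _)
    simpa only [h2] using hsa.mul_left ((2:ℝ) ^ p.toReal)
  set K₀ : Set (ℕ → ℝ) := Set.univ.pi fun n => Set.Icc (-|a n|) (|a n|) with hK₀def
  have hK₀cpt : IsCompact K₀ := isCompact_univ_pi fun n => isCompact_Icc
  have hK₀mem : ∀ t ∈ K₀, Memℓp t p := by
    intro t ht
    refine memℓp_gen (Summable.of_nonneg_of_le
      (fun n => Real.rpow_nonneg (norm_nonneg _) _) (fun n => ?_) hsa)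
    exact Real.rpow_le_rpow (norm_nonneg _)
      (by simpa [Real.norm_eq_abs] using abs_le.2 (ht n (Set.mem_univ n))) hq.le
  set Φ : (ℕ → ℝ) → lpS p := fun t => if h : Memℓp t p then (⟨t, h⟩ : lpS p) else 0 with hΦdef
  have hΦcoe : ∀ (t : ℕ → ℝ) (h : Memℓp t p), ⇑(Φ t) = t := fun t h => by
    simp only [hΦdef, dif_pos h]
  have hΦcont : ContinuousOn Φ K₀ := by
    intro t₀ ht₀
    rw [ContinuousWithinAt, Metric.tendsto_nhds]
    intro ε hε
    have hεq : (0:ℝ) < ε ^ p.toReal / 2 := by positivity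
    obtain ⟨N, hN⟩ := ((tendsto_sum_nat_add
      (fun n => (2 * |a n|) ^ p.toReal)).eventually_lt_const hεq).exists
    set δ : ℝ := (ε ^ p.toReal / (2 * (N + 1))) ^ (p.toReal)⁻¹ with hδdef
    have hδpos : 0 < δ := Real.rpow_pos_of_pos (by positivity) _
    have hδq : δ ^ p.toReal = ε ^ p.toReal / (2 * (N + 1)) :=
      Real.rpow_inv_rpow (by positivity) hq.ne'
    have hev : ∀ᶠ t in 𝓝[K₀] t₀, ∀ i ∈ Finset.range N, |t i - t₀ i| < δ := by
      refine Filter.Eventually.filter_mono nhdsWithin_le_nhds ?_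
      rw [Filter.eventually_all_finset]
      intro i _
      exact ((continuous_apply i).tendsto t₀).eventually (eventually_abs_sub_lt (t₀ i) hδpos)
    filter_upwards [hev, self_mem_nhdsWithin] with t hlt htK
    have h1 : Memℓp t p := hK₀mem t htK
    have h0 : Memℓp t₀ p := hK₀mem t₀ ht₀
    have hcoe : ∀ i, (Φ t - Φ t₀) i = t i - t₀ i := by
      intro i
      rw [lp.coeFn_sub, Pi.sub_apply, hΦcoe t h1, hΦcoe t₀ h0]
    have hDle : ∀ n, |t n - t₀ n| ^ p.toReal ≤ (2 * |a n|) ^ p.toReal := by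
      intro n
      refine Real.rpow_le_rpow (abs_nonneg _) ?_ hq.le
      have h1' : |t n| ≤ |a n| := abs_le.2 (htK n (Set.mem_univ n))
      have h0' : |t₀ n| ≤ |a n| := abs_le.2 (ht₀ n (Set.mem_univ n))
      calc |t n - t₀ n| ≤ |t n| + |t₀ n| := abs_sub _ _
        _ ≤ |a n| + |a n| := add_le_add h1' h0'
        _ = 2 * |a n| := (two_mul _).symm
    have hD : Summable fun n => |t n - t₀ n| ^ p.toReal :=
      Summable.of_nonneg_of_le (fun n => Real.rpow_nonneg (abs_nonneg _) _) hDle hg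
    have hsplit := Summable.sum_add_tsum_nat_add (f := fun n => |t n - t₀ n| ^ p.toReal) N hD
    have hE : (0:ℝ) ≤ ε ^ p.toReal := by positivity
    have hhead : ∑ i ∈ Finset.range N, |t i - t₀ i| ^ p.toReal ≤ ε ^ p.toReal / 2 := by
      calc ∑ i ∈ Finset.range N, |t i - t₀ i| ^ p.toReal
          ≤ ∑ _i ∈ Finset.range N, δ ^ p.toReal :=
            Finset.sum_le_sum fun i hi =>
              Real.rpow_le_rpow (abs_nonneg _) (hlt i hi).le hq.le
        _ = (N : ℝ) * δ ^ p.toReal := by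
            rw [Finset.sum_const, Finset.card_range, nsmul_eq_mul]
        _ ≤ ε ^ p.toReal / 2 := by
            rw [hδq]
            rw [mul_div_assoc', div_le_div_iff₀ (by positivity) two_pos]
            nlinarith [hE]
    have htail : (∑' k, |t (k + N) - t₀ (k + N)| ^ p.toReal) < ε ^ p.toReal / 2 :=
      lt_of_le_of_lt (Summable.tsum_le_tsum (fun k => hDle (k + N))
        ((summable_nat_add_iff N).2 hD) ((summable_nat_add_iff N).2 hg)) hN
    have hnorm : ‖Φ t - Φ t₀‖ ^ p.toReal < ε ^ p.toReal := by
      rw [lp.norm_rpow_eq_tsum hq]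
      have hpt : ∀ i, ‖(Φ t - Φ t₀) i‖ ^ p.toReal = |t i - t₀ i| ^ p.toReal := fun i => by
        rw [Real.norm_eq_abs, hcoe i]
      rw [tsum_congr hpt, ← hsplit]
      linarith
    rw [dist_eq_norm]
    by_contra hcon
    push_neg at hcon
    exact absurd hnorm (not_lt.2 (Real.rpow_le_rpow hε.le hcon hq.le))
  have himg : T '' A ⊆ Φ '' K₀ := by
    rintro _ ⟨x, hx, rfl⟩
    refine ⟨⇑(T x), fun n _ => ?_, ?_⟩
    · exact abs_le.1 ((haA' x hx n).trans (le_abs_self _))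
    · exact lp.ext (hΦcoe _ (lp.memℓp (T x)))
  have hcpt : IsCompact (Φ '' K₀) := hK₀cpt.image_of_continuousOn hΦcont
  exact hcpt.of_isClosed_subset isClosed_closure (closure_minimal himg hcpt.isClosed)
end
end

section
/- If A is a coarse p-limited subset of a Banach space X, then the absolutely convex (circled convex) hull of A is coarse p-limited. -/
open Filter Topology Metric

noncomputable section

variable {W X Y Z : Type*}

/- An operator `T : X → ℓ_p` maps the absolutely convex hull of `A` into the absolutely convex hull
of `T '' A`, which is relatively compact by Mazur's theorem: absolutely convex hulls of totally
bounded sets are totally bounded, and `ℓ_p` is complete. -/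

section AbsConvexHull

variable {𝕜 E F : Type*} [SeminormedRing 𝕜] [PartialOrder 𝕜] [AddCommGroup E] [Module 𝕜 E]
  [AddCommGroup F] [Module 𝕜 F]

theorem AbsConvex.linear_preimage {s : Set F} (hs : AbsConvex 𝕜 s) (f : E →ₗ[𝕜] F) :
    AbsConvex 𝕜 (f ⁻¹' s) :=
  ⟨hs.1.mulActionHom_preimage f.toMulActionHom, hs.2.linear_preimage f⟩

theorem LinearMap.image_absConvexHull_subset (f : E →ₗ[𝕜] F) (s : Set E) :
    f '' absConvexHull 𝕜 s ⊆ absConvexHull 𝕜 (f '' s) :=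
  Set.image_subset_iff.2 <| absConvexHull_min (Set.image_subset_iff.1 subset_absConvexHull)
    (absConvex_absConvexHull.linear_preimage f)

end AbsConvexHull

theorem isCompact_closure_image_absConvexHull {E F : Type*} [AddCommGroup E] [Module ℝ E]
    [TopologicalSpace E] [AddCommGroup F] [Module ℝ F] [UniformSpace F] [IsUniformAddGroup F]
    [LocallyConvexSpace ℝ F] [ContinuousSMul ℝ F] [CompleteSpace F] (T : E →L[ℝ] F) {s : Set E}
    (hs : IsCompact (closure (T '' s))) : IsCompact (closure (T '' absConvexHull ℝ s)) :=
  have hT : TotallyBounded (T '' absConvexHull ℝ s) :=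
    (hs.totallyBounded.subset subset_closure).absConvexHull.subset
      ((T : E →ₗ[ℝ] F).image_absConvexHull_subset s)
  hT.closure.isCompact_of_isClosed isClosed_closure

theorem stmt8_general (p : ENNReal) [Fact (1 ≤ p)]
    [NormedAddCommGroup X] [NormedSpace ℝ X]
    (A : Set X) (hA : CoarsePLimited p A) :
    CoarsePLimited p (absConvexHull ℝ A) :=
  fun T => isCompact_closure_image_absConvexHull T (hA T)

theorem stmt8 (p : ENNReal) [Fact (1 ≤ p)] (hp : p ≠ ⊤)
    [NormedAddCommGroup X] [NormedSpace ℝ X] [CompleteSpace X]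
    (A : Set X) (hA : CoarsePLimited p A) :
    CoarsePLimited p (absConvexHull ℝ A) :=
  stmt8_general p A hA
end
end

section
/- The class of coarse p-limited sets has Grothendieck's encapsulating property: if A ⊆ X is such that for every ε > 0 there exists a coarse p-limited set A_ε with A ⊆ A_ε + ε B_X, then A is coarse p-limited. -/
/-!
For a bounded `T : X → ℓ_p`, `T(A) ⊆ T(A_ε) + ε‖T‖ B_{ℓ_p}` with `T(A_ε)` totally bounded. A set
lying within every positive distance of a totally bounded set is totally bounded, and `ℓ_p` is
complete, so `T(A)` is relatively compact.
-/

open Filter Topology Metric Pointwise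

noncomputable section

variable {W X Y Z : Type*}

theorem Metric.totallyBounded_of_forall_subset_thickening {α : Type*} [PseudoMetricSpace α]
    {s : Set α} (h : ∀ ε > 0, ∃ t, TotallyBounded t ∧ s ⊆ thickening ε t) :
    TotallyBounded s := by
  rw [Metric.totallyBounded_iff]
  intro ε hε
  obtain ⟨t, ht, hst⟩ := h (ε / 2) (half_pos hε)
  obtain ⟨F, hF, htF⟩ := Metric.totallyBounded_iff.mp ht (ε / 2) (half_pos hε)
  refine ⟨F, hF, ?_⟩
  rw [← thickening_eq_biUnion_ball] at htF ⊢
  calc s ⊆ thickening (ε / 2) t := hst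
    _ ⊆ thickening (ε / 2) (thickening (ε / 2) F) := thickening_subset_of_subset _ htF
    _ ⊆ thickening (ε / 2 + ε / 2) F := thickening_thickening_subset _ _ _
    _ = thickening ε F := by rw [add_halves]

theorem totallyBounded_of_forall_subset_add_closedBall {E : Type*} [SeminormedAddCommGroup E]
    {s : Set E} (h : ∀ ε > 0, ∃ t, TotallyBounded t ∧ s ⊆ t + closedBall 0 ε) :
    TotallyBounded s := by
  refine Metric.totallyBounded_of_forall_subset_thickening fun ε hε => ?_
  obtain ⟨t, ht, hst⟩ := h (ε / 2) (half_pos hε)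
  refine ⟨t, ht, ?_⟩
  calc s ⊆ t + closedBall 0 (ε / 2) := hst
    _ ⊆ t + ball 0 ε := Set.add_subset_add_left (closedBall_subset_ball (half_lt_self hε))
    _ = thickening ε t := add_ball_zero _ _

theorem ContinuousLinearMap.image_add_closedBall_zero_subset {𝕜 E F : Type*}
    [NontriviallyNormedField 𝕜] [SeminormedAddCommGroup E] [NormedSpace 𝕜 E] [SeminormedAddCommGroup F] [NormedSpace 𝕜 F]
    (T : E →L[𝕜] F) (B : Set E) (r : ℝ) :
    T '' (B + closedBall 0 r) ⊆ T '' B + closedBall 0 (‖T‖ * r) := by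
  rw [Set.image_add]
  refine Set.add_subset_add_left ?_
  rintro _ ⟨x, hx, rfl⟩
  rw [mem_closedBall_zero_iff] at hx ⊢
  exact T.le_opNorm_of_le hx

theorem stmt11_general (p : ENNReal) [Fact (1 ≤ p)]
    [NormedAddCommGroup X] [NormedSpace ℝ X]
    (A : Set X)
    (h : ∀ ε : ℝ, 0 < ε → ∃ B : Set X, CoarsePLimited p B ∧ A ⊆ B + ε • closedBall (0 : X) 1) :
    CoarsePLimited p A := by
  intro T
  have hTA : TotallyBounded (T '' A) := by
    refine totallyBounded_of_forall_subset_add_closedBall fun ε hε => ?_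
    have hδ : 0 < ε / (‖T‖ + 1) := by positivity
    obtain ⟨B, hB, hAB⟩ := h _ hδ
    rw [smul_unitClosedBall_of_nonneg hδ.le] at hAB
    refine ⟨T '' B, totallyBounded_closure.mp (hB T).totallyBounded, ?_⟩
    calc T '' A ⊆ T '' B + closedBall 0 (‖T‖ * (ε / (‖T‖ + 1))) :=
          (Set.image_mono hAB).trans (T.image_add_closedBall_zero_subset B _)
      _ ⊆ T '' B + closedBall 0 ε := by
          refine Set.add_subset_add_left (closedBall_subset_closedBall ?_)
          rw [mul_div_assoc', div_le_iff₀ (by positivity)]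
          nlinarith
  exact (totallyBounded_closure.mpr hTA).isCompact_of_isClosed isClosed_closure

theorem stmt11 (p : ENNReal) [Fact (1 ≤ p)] (hp : p ≠ ⊤)
    [NormedAddCommGroup X] [NormedSpace ℝ X] [CompleteSpace X]
    (A : Set X)
    (h : ∀ ε : ℝ, 0 < ε → ∃ B : Set X, CoarsePLimited p B ∧ A ⊆ B + ε • closedBall (0 : X) 1) :
    CoarsePLimited p A :=
  stmt11_general p A h
end
end

section
/- A Banach space X has the coarse p-DP* property if and only if every bounded linear operator T : X → ℓ_p is completely continuous (maps weakly null sequences to norm null sequences). -/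
open Filter Topology Metric

noncomputable section

variable {W X Y Z : Type*}

/-! A weakly null sequence together with its limit `0` is weakly compact, so under coarse `p`-DP*
its image under `T` is norm compact, and a weakly null sequence in a norm compact set is norm null.
Conversely, a completely continuous `T` is sequentially continuous from the weak topology to the
norm topology, so it suffices that weakly compact sets are weakly sequentially compact. A sequence
lies in a separable closed subspace, which is weakly closed and whose points are separated by
countably many functionals; hence the part of the weakly compact set inside it is metrizable. -/

open Set TopologicalSpace

section WeakTopology

variable {E F : Type*} [NormedAddCommGroup E] [NormedSpace ℝ E]

theorem injective_topDualPairing_flip : Function.Injective (topDualPairing ℝ E).flip :=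
  fun u v h => by
    by_contra hne
    obtain ⟨f, hf⟩ := SeparatingDual.exists_separating_of_ne (R := ℝ) hne
    exact hf (DFunLike.congr_fun h f)

theorem tendsto_toWeakSpace_iff {ι : Type*} {l : Filter ι} {x : ι → E} {a : E} :
    Tendsto (fun i => toWeakSpace ℝ E (x i)) l (𝓝 (toWeakSpace ℝ E a)) ↔
      ∀ f : StrongDual ℝ E, Tendsto (fun i => f (x i)) l (𝓝 (f a)) :=
  WeakBilin.tendsto_iff_forall_eval_tendsto _ injective_topDualPairing_flip

theorem continuous_dual_toWeakSpace_symm (f : StrongDual ℝ E) :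
    Continuous fun w : WeakSpace ℝ E => f ((toWeakSpace ℝ E).symm w) :=
  WeakBilin.eval_continuous (topDualPairing ℝ E).flip f

theorem eq_zero_of_mem_closure_range_of_norming {z : ℕ → E} {f : ℕ → StrongDual ℝ E}
    (hf : ∀ i, ‖f i‖ ≤ 1) (hfz : ∀ i, f i (z i) = ‖z i‖) {w : E}
    (hw : w ∈ closure (range z)) (hfw : ∀ i, f i w = 0) : w = 0 := by
  have hdist : ∀ i, ‖w‖ ≤ 2 * dist w (z i) := by
    intro i
    have hz : ‖z i‖ ≤ ‖z i - w‖ := calc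
      ‖z i‖ = f i (z i - w) := by rw [map_sub, hfz, hfw, sub_zero]
      _ ≤ ‖f i (z i - w)‖ := Real.le_norm_self _
      _ ≤ ‖z i - w‖ := by simpa using (f i).le_of_opNorm_le (hf i) (z i - w)
    rw [dist_eq_norm, ← norm_sub_rev]
    linarith [norm_le_norm_add_norm_sub' w (z i), norm_sub_rev w (z i)]
  rw [← norm_le_zero_iff]
  refine le_of_forall_pos_le_add fun ε hε => ?_
  obtain ⟨i, hi⟩ := mem_closure_range_iff.mp hw (ε / 2) (half_pos hε)
  linarith [hdist i]

/-- Take norming functionals of a dense sequence in the span of `S`. -/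
theorem TopologicalSpace.IsSeparable.exists_injOn_dual {S : Set E} (hS : IsSeparable S) :
    ∃ f : ℕ → StrongDual ℝ E, InjOn (fun x i => f i x) S := by
  obtain ⟨c, hc, hspan⟩ := hS.span (R := ℝ)
  obtain ⟨z, hz⟩ := (hc.insert 0).exists_eq_range (insert_nonempty 0 c)
  choose f hf hfz using fun i => exists_dual_vector'' ℝ (z i)
  refine ⟨f, fun u hu v hv huv => sub_eq_zero.mp ?_⟩
  refine eq_zero_of_mem_closure_range_of_norming hf (by simpa using hfz) ?_ fun i => ?_
  · rw [← hz]
    exact closure_mono (subset_insert 0 c)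
      (hspan (sub_mem (Submodule.subset_span hu) (Submodule.subset_span hv)))
  · simp [map_sub, congrFun huv i]

theorem IsCompact.isSeqCompact_of_injOn {α β : Type*} [TopologicalSpace α] [TopologicalSpace β]
    [T2Space β] [MetrizableSpace β] {K : Set α} (hK : IsCompact K) {g : α → β}
    (hg : ContinuousOn g K) (hinj : InjOn g K) : IsSeqCompact K := by
  have := isCompact_iff_compactSpace.mp hK
  have := (hg.domRestrict.isClosedEmbedding hinj.injective).isEmbedding.metrizableSpace
  exact isSeqCompact_iff_seqCompactSpace.mpr inferInstance

theorem IsCompact.isSeqCompact_weakSpace {K : Set (WeakSpace ℝ E)} (hK : IsCompact K) :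
    IsSeqCompact K := by
  intro k hk
  set s : Submodule ℝ E := Submodule.span ℝ (range fun n => (toWeakSpace ℝ E).symm (k n))
  set Y : Set E := closure s
  have hYsep : IsSeparable Y := ((countable_range _).isSeparable.span).closure
  have hYweak : IsClosed (toWeakSpace ℝ E '' Y) := by
    rw [s.convex.toWeakSpace_closure ℝ]
    exact isClosed_closure
  obtain ⟨f, hf⟩ := hYsep.exists_injOn_dual
  have hK₀ : IsSeqCompact (K ∩ toWeakSpace ℝ E '' Y) := by
    refine (hK.inter_right hYweak).isSeqCompact_of_injOn
      (g := fun w i => f i ((toWeakSpace ℝ E).symm w))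
      (continuous_pi fun i => continuous_dual_toWeakSpace_symm (f i)).continuousOn ?_
    rintro _ ⟨-, y, hy, rfl⟩ _ ⟨-, y', hy', rfl⟩ h
    simpa using congrArg (toWeakSpace ℝ E) (hf hy hy' (by simpa using h))
  obtain ⟨a, ha, φ, hφ, hlim⟩ := hK₀ (x := k) fun n =>
    ⟨hk n, _, subset_closure (Submodule.subset_span ⟨n, rfl⟩), LinearEquiv.apply_symm_apply _ _⟩
  exact ⟨a, ha.1, φ, hφ, hlim⟩

variable [NormedAddCommGroup F] [NormedSpace ℝ F] {x : ℕ → E}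

theorem WeaklyNull.map (hx : WeaklyNull x) (T : E →L[ℝ] F) : WeaklyNull fun n => T (x n) :=
  fun f => hx (f.comp T)

theorem WeaklyNull.relWeaklyCompact_insert_zero_range (hx : WeaklyNull x) :
    RelWeaklyCompact (insert 0 (range x)) := by
  have hlim : Tendsto (fun n => toWeakSpace ℝ E (x n)) atTop (𝓝 (toWeakSpace ℝ E 0)) :=
    tendsto_toWeakSpace_iff.mpr fun f => by simpa using hx f
  unfold RelWeaklyCompact
  rw [image_insert_eq, ← range_comp]
  exact hlim.isCompact_insert_range.closure

theorem WeaklyNull.normNull_of_mem_isCompact {K : Set E} (hx : WeaklyNull x) (hK : IsCompact K)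
    (hxK : ∀ n, x n ∈ K) : NormNull x := by
  rw [NormNull, ← tendsto_zero_iff_norm_tendsto_zero]
  refine tendsto_of_subseq_tendsto fun ns hns => ?_
  obtain ⟨z, -, φ, hφ, hz⟩ := hK.tendsto_subseq fun n => hxK (ns n)
  have hz0 : z = 0 := SeparatingDual.eq_zero_of_forall_dual_eq_zero fun f =>
    tendsto_nhds_unique ((f.continuous.tendsto z).comp hz)
      ((hx f).comp (hns.comp hφ.tendsto_atTop))
  exact ⟨φ, hz0 ▸ hz⟩

theorem seqContinuous_toWeakSpace_symm_of_weaklyNull {T : E →L[ℝ] F}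
    (hT : ∀ x : ℕ → E, WeaklyNull x → NormNull fun n => T (x n)) :
    SeqContinuous fun w : WeakSpace ℝ E => T ((toWeakSpace ℝ E).symm w) := by
  intro w a hw
  have hnull : WeaklyNull fun n => (toWeakSpace ℝ E).symm (w n) - (toWeakSpace ℝ E).symm a :=
    fun f => by
      simpa using (((continuous_dual_toWeakSpace_symm f).tendsto a).comp hw).sub_const
        (f ((toWeakSpace ℝ E).symm a))
  rw [tendsto_iff_norm_sub_tendsto_zero]
  simpa [map_sub, NormNull] using hT _ hnull

end WeakTopology

theorem stmt12_general (p : ENNReal) [Fact (1 ≤ p)]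
    [NormedAddCommGroup X] [NormedSpace ℝ X] :
    CoarsePDPstar p X ↔
      ∀ T : X →L[ℝ] lpS p, ∀ x : ℕ → X, WeaklyNull x → NormNull (fun n => T (x n)) := by
  constructor
  · intro hDP T x hx
    exact (hx.map T).normNull_of_mem_isCompact (hDP _ hx.relWeaklyCompact_insert_zero_range T)
      fun n => subset_closure ⟨x n, mem_insert_of_mem 0 ⟨n, rfl⟩, rfl⟩
  · intro hCC A hA T
    have hC : IsCompact
        ((fun w => T ((toWeakSpace ℝ X).symm w)) '' closure (toWeakSpaceCLM ℝ X '' A)) :=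
      (IsSeqCompact.image (seqContinuous_toWeakSpace_symm_of_weaklyNull (hCC T))
        hA.isSeqCompact_weakSpace).isCompact
    refine hC.of_isClosed_subset isClosed_closure (closure_minimal ?_ hC.isClosed)
    rintro _ ⟨a, ha, rfl⟩
    exact ⟨_, subset_closure (mem_image_of_mem _ ha), by simp⟩

theorem stmt12 (p : ENNReal) [Fact (1 ≤ p)] (hp : p ≠ ⊤)
    [NormedAddCommGroup X] [NormedSpace ℝ X] [CompleteSpace X] :
    CoarsePDPstar p X ↔
      ∀ T : X →L[ℝ] lpS p, ∀ x : ℕ → X, WeaklyNull x → NormNull (fun n => T (x n)) :=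
  stmt12_general p
end
end

section
/- A Banach space X has the coarse p-DP* property if and only if every conditionally weakly compact subset of X is coarse p-limited. -/
open Filter Topology Metric

noncomputable section

variable {W X Y Z : Type*}

/-! Relatively weakly compact sets are conditionally weakly compact: the weak closure `K` of a
sequence lies in the closed span of the sequence (Mazur), a separable subspace on which countably
many functionals separate points; hence the compact set `K` is metrizable and the sequence has a
weakly convergent subsequence.

Conversely, if relatively weakly compact sets are coarse `p`-limited, every `T : X → ℓ_p` maps
weakly null sequences (whose ranges are relatively weakly compact) to norm null ones. If `T(A)` were
not relatively compact for a conditionally weakly compact `A`, pick `x_n ∈ A` with `(T x_n)`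
uniformly separated and `(x_n)` weakly Cauchy: the successive differences `x_{n+1} - x_n` are
weakly null, yet their images stay bounded away from `0`. -/

section WeakTopology

variable {E : Type*} [NormedAddCommGroup E] [NormedSpace ℝ E]

lemma continuous_dual_comp_toWeakSpace_symm (f : E →L[ℝ] ℝ) :
    Continuous fun x : WeakSpace ℝ E => f ((toWeakSpace ℝ E).symm x) :=
  WeakBilin.eval_continuous (topDualPairing ℝ E).flip f

lemma tendsto_toWeakSpaceCLM_iff {ι : Type*} {l : Filter ι} {u : ι → E} {x : E} :
    Tendsto (fun n => toWeakSpaceCLM ℝ E (u n)) l (𝓝 (toWeakSpaceCLM ℝ E x)) ↔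
      ∀ f : E →L[ℝ] ℝ, Tendsto (fun n => f (u n)) l (𝓝 (f x)) :=
  WeakBilin.tendsto_iff_forall_eval_tendsto _ fun _ _ h =>
    SeparatingDual.eq_iff_forall_dual_eq.2 fun g => DFunLike.congr_fun h g

lemma TopologicalSpace.IsSeparable.exists_seq_dual_separating {t : Set E} (ht : IsSeparable t) :
    ∃ g : ℕ → E →L[ℝ] ℝ, ∀ a ∈ t, (∀ n, g n a = 0) → a = 0 := by
  obtain ⟨c, hc, htc⟩ := ht
  obtain ⟨d, hd⟩ := (hc.insert 0).exists_eq_range (Set.insert_nonempty 0 c)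
  choose g hg_norm hg_eq using fun n => exists_dual_vector'' ℝ (d n)
  refine ⟨g, fun a ha hga => ?_⟩
  have hle : ∀ n, ‖a‖ ≤ 2 * ‖a - d n‖ := fun n => by
    have : ‖d n‖ ≤ ‖a - d n‖ := calc
      ‖d n‖ = g n (d n - a) := by rw [map_sub, hg_eq, hga, sub_zero]; rfl
      _ ≤ ‖g n‖ * ‖d n - a‖ := (le_abs_self _).trans ((g n).le_opNorm _)
      _ ≤ ‖a - d n‖ := by
        rw [norm_sub_rev]
        exact mul_le_of_le_one_left (norm_nonneg _) (hg_norm n)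
    linarith [norm_le_norm_sub_add a (d n)]
  have had : a ∈ closure (Set.range d) := hd ▸ closure_mono (Set.subset_insert 0 c) (htc ha)
  by_contra ha0
  obtain ⟨n, hn⟩ := Metric.mem_closure_range_iff.1 had (‖a‖ / 2) (by positivity)
  linarith [hle n, dist_eq_norm a (d n)]

end WeakTopology

lemma IsCompact.isSeqCompact_of_separating [TopologicalSpace Z] {K : Set Z} (hK : IsCompact K)
    {f : ℕ → Z → ℝ} (hf : ∀ n, Continuous (f n))
    (hsep : ∀ a ∈ K, ∀ b ∈ K, (∀ n, f n a = f n b) → a = b) : IsSeqCompact K := by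
  have : CompactSpace K := isCompact_iff_compactSpace.mp hK
  have : TopologicalSpace.MetrizableSpace K :=
    Metric.PiNatEmbed.TopologicalSpace.MetrizableSpace.of_countable_separating
      (fun n (k : K) => f n k) (fun n => (hf n).comp continuous_subtype_val)
      fun a b hab => not_forall.1 fun h => hab (Subtype.ext (hsep a a.2 b b.2 h))
  simpa using Subtype.isSeqCompact_iff.1 (isSeqCompact_univ (X := K))

lemma exists_separated_seq_of_not_isCompact_closure {F : Type*} [PseudoMetricSpace F]
    [CompleteSpace F] {S : Set F} (hS : ¬ IsCompact (closure S)) :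
    ∃ ε > 0, ∃ u : ℕ → F, (∀ n, u n ∈ S) ∧ ∀ m n, m < n → ε ≤ dist (u n) (u m) := by
  have hS' : ¬ TotallyBounded S := fun h =>
    hS (h.closure.isCompact_of_isClosed isClosed_closure)
  obtain ⟨ε, hε, hfar⟩ :
      ∃ ε > 0, ∀ t : Set F, t.Finite → ∃ c ∈ S, ∀ y ∈ t, ε ≤ dist c y := by
    simpa [Metric.totallyBounded_iff, Set.subset_def] using hS'
  obtain ⟨u, hu⟩ := Set.seq_of_forall_finite_exists fun t ht => hfar t ht
  exact ⟨ε, hε, u, fun n => (hu n).1, fun m n hmn => (hu n).2 _ ⟨m, hmn, rfl⟩⟩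

section

variable [NormedAddCommGroup X] [NormedSpace ℝ X] [NormedAddCommGroup Y] [NormedSpace ℝ Y]

namespace WeaklyNull

variable {x : ℕ → X}

lemma map_s13 (hx : WeaklyNull x) (T : X →L[ℝ] Y) : WeaklyNull fun n => T (x n) :=
  fun f => hx (f.comp T)

lemma relWeaklyCompact_range (hx : WeaklyNull x) : RelWeaklyCompact (Set.range x) := by
  have hlim : Tendsto (fun n => toWeakSpaceCLM ℝ X (x n)) atTop (𝓝 (toWeakSpaceCLM ℝ X 0)) :=
    tendsto_toWeakSpaceCLM_iff.2 fun f => by simpa using hx f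
  have hK := hlim.isCompact_insert_range
  refine hK.of_isClosed_subset isClosed_closure (closure_minimal ?_ hK.isClosed)
  rw [← Set.range_comp]
  exact Set.subset_insert _ _

lemma normNull_of_isCompact_closure_range (hx : WeaklyNull x)
    (hc : IsCompact (closure (Set.range x))) : NormNull x := by
  have hlim : Tendsto x atTop (𝓝 0) := by
    refine hc.tendsto_nhds_of_unique_mapClusterPt
      (Eventually.of_forall fun n => subset_closure (Set.mem_range_self n)) fun a _ ha => ?_
    refine SeparatingDual.eq_zero_of_forall_dual_eq_zero (R := ℝ) fun f => ?_
    exact eq_of_nhds_neBot ((ha.continuousAt_comp f.continuous.continuousAt).neBot.mono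
      (inf_le_inf_left _ (hx f)))
  exact tendsto_zero_iff_norm_tendsto_zero.1 hlim

lemma normNull_map {T : X →L[ℝ] Y}
    (hT : ∀ A : Set X, RelWeaklyCompact A → IsCompact (closure (T '' A))) (hx : WeaklyNull x) :
    NormNull fun n => T (x n) :=
  (hx.map_s13 T).normNull_of_isCompact_closure_range <| by
    have := hT _ hx.relWeaklyCompact_range
    rwa [← Set.range_comp] at this

end WeaklyNull

lemma WeaklyCauchy.weaklyNull_succ_sub {x : ℕ → X} (hx : WeaklyCauchy x) :
    WeaklyNull fun n => x (n + 1) - x n := fun f => by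
  obtain ⟨L, hL⟩ := cauchySeq_tendsto_of_complete (hx f)
  simpa using (hL.comp (tendsto_add_atTop_nat 1)).sub hL

lemma CondWeaklyCompact.isCompact_closure_image [CompleteSpace Y] {A : Set X}
    (hA : CondWeaklyCompact A) {T : X →L[ℝ] Y}
    (hT : ∀ x : ℕ → X, WeaklyNull x → NormNull fun n => T (x n)) :
    IsCompact (closure (T '' A)) := by
  by_contra hc
  obtain ⟨ε, hε, u, huA, hsep⟩ := exists_separated_seq_of_not_isCompact_closure hc
  choose x hxA hxu using huA
  obtain ⟨φ, hφ, hcauchy⟩ := hA x hxA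
  have hfar : ∀ n, ε ≤ ‖T ((x ∘ φ) (n + 1) - (x ∘ φ) n)‖ := fun n => by
    simpa [hxu, dist_eq_norm] using hsep _ _ (hφ n.lt_succ_self)
  exact hε.not_ge (ge_of_tendsto' (hT _ hcauchy.weaklyNull_succ_sub) hfar)

lemma RelWeaklyCompact.condWeaklyCompact {A : Set X} (hA : RelWeaklyCompact A) :
    CondWeaklyCompact A := by
  intro x hx
  set J := toWeakSpaceCLM ℝ X
  set V := (Submodule.span ℝ (Set.range x)).topologicalClosure
  set K := closure (J '' Set.range x)
  have hK : IsCompact K := hA.of_isClosed_subset isClosed_closure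
    (closure_mono (Set.image_mono (Set.range_subset_iff.2 hx)))
  -- Mazur: the closed subspace `V` is weakly closed.
  have hKV : K ⊆ J '' V := by
    have hV : closure (J '' V) = J '' V := by
      have := V.convex.toWeakSpace_closure ℝ
      rw [(Submodule.span ℝ (Set.range x)).isClosed_topologicalClosure.closure_eq] at this
      exact this.symm
    exact hV ▸ closure_mono (Set.image_mono ((Submodule.subset_span).trans
      (Submodule.le_topologicalClosure _)))
  obtain ⟨g, hg⟩ :=
    ((Set.countable_range x).isSeparable.span (R := ℝ)).closure.exists_seq_dual_separating
  have hseq : IsSeqCompact K := by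
    refine hK.isSeqCompact_of_separating (fun n => continuous_dual_comp_toWeakSpace_symm (g n)) ?_
    rintro _ ha _ hb hab
    obtain ⟨a, haV, rfl⟩ := hKV ha
    obtain ⟨b, hbV, rfl⟩ := hKV hb
    have := hg (a - b) (V.sub_mem haV hbV) fun n => by rw [map_sub, sub_eq_zero]; exact hab n
    rw [sub_eq_zero.1 this]
  obtain ⟨z, -, φ, hφ, hlim⟩ :=
    hseq fun n => subset_closure (Set.mem_image_of_mem J (Set.mem_range_self n))
  exact ⟨φ, hφ, fun f =>
    (((continuous_dual_comp_toWeakSpace_symm f).tendsto z).comp hlim).cauchySeq⟩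

end

theorem stmt13_general (p : ENNReal) [Fact (1 ≤ p)]
    [NormedAddCommGroup X] [NormedSpace ℝ X] :
    CoarsePDPstar p X ↔ ∀ A : Set X, CondWeaklyCompact A → CoarsePLimited p A := by
  constructor
  · intro h A hA T
    exact hA.isCompact_closure_image fun x hx => hx.normNull_map fun B hB => h B hB T
  · exact fun h A hA => h A hA.condWeaklyCompact

theorem stmt13 (p : ENNReal) [Fact (1 ≤ p)] (hp : p ≠ ⊤)
    [NormedAddCommGroup X] [NormedSpace ℝ X] [CompleteSpace X] :
    CoarsePDPstar p X ↔ ∀ A : Set X, CondWeaklyCompact A → CoarsePLimited p A :=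
  stmt13_general p
end
end

section
/- If a Banach space X contains no isomorphic copy of ℓ₁ and has the coarse p-DP* property, then the closed unit ball B_X is a coarse p-limited set. -/
open Filter Topology Metric

noncomputable section

variable {W X Y Z : Type*}

/-!
By Rosenthal's `ℓ₁` theorem every sequence in the unit ball of `X` has a weakly Cauchy
subsequence. If `(x n)` is weakly Cauchy, the differences `x m - x n` along any sequence of
pairs `(m, n)` tending to infinity form a weakly null sequence `z`. The set `{0} ∪ range z` is
weakly compact, so by the coarse `p`-DP* property an operator `T : X → ℓ_p` maps it to a
relatively norm compact set, on which the weakly null sequence `T ∘ z` must tend to `0` in norm.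
Hence `T` maps weakly Cauchy sequences to Cauchy sequences, and `T (B_X)` is totally bounded.

Rosenthal's theorem comes from his combinatorial dichotomy: for `r < s`, the pairs of sets
`{f : f (x n) < r}` and `{f : s < f (x n)}` in the dual unit ball either converge along a
subsequence (no `f` lies in infinitely many of both) or are Boolean independent along a
subsequence; in the second case that subsequence spans `ℓ₁`, with lower constant `(s - r) / 2`.
A diagonal argument over all rational pairs `r < s` gives a weakly Cauchy subsequence.
-/

theorem totallyBounded_of_forall_exists_cauchySeq {α : Type*} [UniformSpace α] {s : Set α}
    (h : ∀ u : ℕ → α, (∀ n, u n ∈ s) → ∃ φ : ℕ → ℕ, StrictMono φ ∧ CauchySeq (u ∘ φ)) :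
    TotallyBounded s := by
  intro V hV
  by_contra! hs
  obtain ⟨u, hus, hu⟩ : ∃ u : ℕ → α, (∀ n, u n ∈ s) ∧
      ∀ n m, m < n → u m ∉ UniformSpace.ball (u n) V := by
    simp only [Set.not_subset, Set.mem_iUnion₂, not_exists, exists_prop] at hs
    simpa only [forall_and, Set.forall_mem_image, not_and] using! Set.seq_of_forall_finite_exists hs
  obtain ⟨φ, hφ, hcauchy⟩ := h u hus
  obtain ⟨N, hN⟩ := hcauchy.mem_entourage hV
  exact hu (φ (N + 1)) (φ N) (hφ (Nat.lt_add_one N)) (hN (N + 1) N N.le_succ le_rfl)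

open Set in
theorem exists_strictMono_forall_of_sdiff_finite {ι : Type*} [Countable ι]
    (P : ι → Set ℕ → Prop) (hP : ∀ i L L', P i L → (L' \ L).Finite → P i L')
    (hex : ∀ i M, M.Infinite → ∃ L ⊆ M, L.Infinite ∧ P i L) :
    ∃ φ : ℕ → ℕ, StrictMono φ ∧ ∀ i, P i (range φ) := by
  rcases isEmpty_or_nonempty ι with hι | hι
  · exact ⟨id, strictMono_id, fun i => isEmptyElim i⟩
  obtain ⟨g, hg⟩ := exists_surjective_nat ι
  let S := {L : Set ℕ // L.Infinite}
  have step : ∀ k (L : S), ∃ L' : S, L'.1 ⊆ L.1 ∧ P (g k) L'.1 := fun k L => by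
    obtain ⟨L', hsub, hL', hP'⟩ := hex (g k) L.1 L.2
    exact ⟨⟨L', hL'⟩, hsub, hP'⟩
  choose next hsub hnext using step
  let N : ℕ → S := fun k => Nat.rec ⟨univ, infinite_univ⟩ next k
  have hanti : Antitone fun k => (N k).1 := antitone_nat_of_succ_le fun k => hsub k (N k)
  choose pick hpick hgt using fun k m => (N k).2.exists_gt m
  let φ : ℕ → ℕ := fun k => Nat.rec (pick 0 0) (fun k m => pick (k + 1) m) k
  have hφN : ∀ k, φ k ∈ (N k).1 := by
    rintro (_ | k)
    exacts [hpick 0 0, hpick (k + 1) (φ k)]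
  refine ⟨φ, strictMono_nat_of_lt_succ fun k => hgt _ _, fun i => ?_⟩
  obtain ⟨k, rfl⟩ := hg i
  refine hP _ _ _ (hnext k (N k)) (((finite_lt_nat (k + 1)).image φ).subset ?_)
  rintro _ ⟨⟨j, rfl⟩, hj⟩
  exact ⟨j, not_le.1 fun hkj => hj (hanti hkj (hφN j)), rfl⟩

theorem cauchySeq_of_forall_rat_finite {u : ℕ → ℝ} {C : ℝ} (hu : ∀ n, |u n| ≤ C)
    (h : ∀ r s : ℚ, r < s → {n | u n < r}.Finite ∨ {n | s < u n}.Finite) : CauchySeq u := by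
  have hle : IsBoundedUnder (· ≤ ·) atTop u := isBoundedUnder_of ⟨C, fun n => (abs_le.1 (hu n)).2⟩
  have hge : IsBoundedUnder (· ≥ ·) atTop u :=
    isBoundedUnder_of ⟨-C, fun n => (abs_le.1 (hu n)).1⟩
  suffices limsup u atTop ≤ liminf u atTop from (tendsto_of_liminf_eq_limsup
    (le_antisymm (liminf_le_limsup hle hge) this) rfl hle hge).cauchySeq
  by_contra! hlt
  obtain ⟨r, hr, hrs⟩ := exists_rat_btwn hlt
  obtain ⟨s, hrs, hs⟩ := exists_rat_btwn hrs
  rcases h r s (by exact_mod_cast hrs) with hfin | hfin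
  · exact Nat.frequently_atTop_iff_infinite.1
      (frequently_lt_of_liminf_lt hle.isCoboundedUnder_flip hr) hfin
  · exact Nat.frequently_atTop_iff_infinite.1
      (frequently_lt_of_lt_limsup hge.isCoboundedUnder_flip hs) hfin

namespace Rosenthal

open Set

variable {α : Type*} (A B : ℕ → Set α)

def piece (b : Bool) (n : ℕ) : Set α := bif b then A n else B n

def Splits (D : Set α) (L : Set ℕ) : Prop :=
  ∃ s ∈ D, {n ∈ L | s ∈ A n}.Infinite ∧ {n ∈ L | s ∈ B n}.Infinite

def Rich (D : Set α) (M : Set ℕ) : Prop :=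
  ∀ L ⊆ M, L.Infinite → Splits A B D L

def ConvergesOn (L : Set ℕ) : Prop :=
  ∀ s : α, {n ∈ L | s ∈ A n}.Finite ∨ {n ∈ L | s ∈ B n}.Finite

def Independent (e : ℕ → ℕ) : Prop :=
  ∀ F G : Finset ℕ, Disjoint F G → ((⋂ j ∈ F, A (e j)) ∩ ⋂ j ∈ G, B (e j)).Nonempty

def cell (e : ℕ → ℕ) (σ : ℕ → Bool) : ℕ → Set α
  | 0 => univ
  | k + 1 => cell e σ k ∩ piece A B (σ k) (e k)

variable {A B}

theorem ConvergesOn.of_sdiff_finite {L L' : Set ℕ} (h : ConvergesOn A B L)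
    (hL : (L' \ L).Finite) : ConvergesOn A B L' := fun s =>
  (h s).imp (fun hA => (hA.union hL).subset fun n hn => by by_cases n ∈ L <;> aesop)
    (fun hB => (hB.union hL).subset fun n hn => by by_cases n ∈ L <;> aesop)

theorem ConvergesOn.comp_range {φ : ℕ → ℕ} (h : ConvergesOn A B (Set.range φ))
    (hφ : φ.Injective) (s : α) : {i | s ∈ A (φ i)}.Finite ∨ {i | s ∈ B (φ i)}.Finite :=
  (h s).imp (fun hA => (hA.preimage hφ.injOn).subset fun i hi => ⟨⟨i, rfl⟩, hi⟩)
    (fun hB => (hB.preimage hφ.injOn).subset fun i hi => ⟨⟨i, rfl⟩, hi⟩)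

theorem splits_of_sdiff_finite {D : Set α} {L L' : Set ℕ} {s : α} (hs : s ∈ D)
    (hA : {n ∈ L | s ∈ A n}.Infinite) (hB : {n ∈ L | s ∈ B n}.Infinite)
    (hL : (L \ L').Finite) : Splits A B D L' := by
  refine ⟨s, hs, (hA.sdiff hL).mono ?_, (hB.sdiff hL).mono ?_⟩ <;>
    exact fun n ⟨⟨hnL, hn⟩, hnL'⟩ => ⟨by_contra fun h => hnL' ⟨hnL, h⟩, hn⟩

/-- Pigeonholing the labels `(i k, b k)`, richness of `D i₀` along the points `n k` with a fixed
label yields a point that splits `D (i k) ∩ piece A B (b k) (n k)` along `L k` for some `k`. -/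
theorem not_rich_of_chain {ι : Type*} [Finite ι] {D : ι → Set α} {M : Set ℕ}
    (hD : ∀ i, Rich A B (D i) M) (L : ℕ → Set ℕ) (n : ℕ → ℕ) (i : ℕ → ι) (b : ℕ → Bool)
    (hn : StrictMono n) (hnM : ∀ k, n k ∈ M) (htail : ∀ k j, k < j → n j ∈ L k)
    (hL : ∀ k, ¬ Splits A B (D (i k) ∩ piece A B (b k) (n k)) (L k)) : False := by
  obtain ⟨⟨i₀, b₀⟩, hfiber⟩ := Finite.exists_infinite_fiber fun k => (i k, b k)
  set K := (fun k => (i k, b k)) ⁻¹' {(i₀, b₀)}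
  obtain ⟨s, hsD, hA, hB⟩ := hD i₀ (n '' K) (image_subset_iff.2 fun k _ => hnM k)
    ((infinite_coe_iff.1 hfiber).image hn.injective.injOn)
  obtain ⟨k, hkK, hsk⟩ : ∃ k ∈ K, s ∈ piece A B b₀ (n k) := by
    cases b₀
    · obtain ⟨_, ⟨k, hk, rfl⟩, hs⟩ := hB.nonempty
      exact ⟨k, hk, hs⟩
    · obtain ⟨_, ⟨k, hk, rfl⟩, hs⟩ := hA.nonempty
      exact ⟨k, hk, hs⟩
  obtain ⟨hik, hbk⟩ : i k = i₀ ∧ b k = b₀ := by simpa [K] using hkK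
  refine hL k (splits_of_sdiff_finite ⟨hik ▸ hsD, hbk ▸ hsk⟩ hA hB
    (((finite_Iic k).image n).subset ?_))
  rintro _ ⟨⟨j, -, rfl⟩, hj⟩
  exact ⟨j, not_lt.1 fun hkj => hj (htail k j hkj), rfl⟩

theorem exists_rich_extension {ι : Type*} [Finite ι] (D : ι → Set α) {M : Set ℕ}
    (hM : M.Infinite) (hD : ∀ i, Rich A B (D i) M) :
    ∃ n ∈ M, ∃ M' ⊆ M, M'.Infinite ∧ (∀ m ∈ M', n < m) ∧
      ∀ i b, Rich A B (D i ∩ piece A B b n) M' := by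
  by_contra! hcon
  let S := {L : Set ℕ // L ⊆ M ∧ L.Infinite}
  have step : ∀ L : S, ∃ L' : S, ∃ i b, L'.1 ⊆ L.1 ∧ (∀ m ∈ L'.1, sInf L.1 < m) ∧
      ¬ Splits A B (D i ∩ piece A B b (sInf L.1)) L'.1 := by
    rintro ⟨L, hLM, hL⟩
    have hmin : sInf L ∈ L := Nat.sInf_mem hL.nonempty
    set M' := {m ∈ L | sInf L < m}
    have hM' : M'.Infinite :=
      (hL.sdiff (finite_Iic (sInf L))).mono fun m hm => ⟨hm.1, not_le.1 hm.2⟩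
    obtain ⟨i, b, hnot⟩ := hcon _ (hLM hmin) M' (fun m hm => hLM hm.1) hM' fun m hm => hm.2
    obtain ⟨L', hL'sub, hL', hns⟩ : ∃ L' ⊆ M', L'.Infinite ∧
        ¬ Splits A B (D i ∩ piece A B b (sInf L)) L' := by
      simpa [Rich] using hnot
    exact ⟨⟨L', fun m hm => hLM (hL'sub hm).1, hL'⟩, i, b, fun m hm => (hL'sub hm).1,
      fun m hm => (hL'sub hm).2, hns⟩
  choose next i b hsub hgt hns using step
  let c : ℕ → S := fun k => next^[k] ⟨M, subset_rfl, hM⟩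
  have hc : ∀ k, c (k + 1) = next (c k) := fun k => Function.iterate_succ_apply' _ _ _
  have hmin : ∀ k, sInf (c k).1 ∈ (c k).1 := fun k => Nat.sInf_mem (c k).2.2.nonempty
  have hanti : Antitone fun k => (c k).1 := antitone_nat_of_succ_le fun k => hc k ▸ hsub _
  exact not_rich_of_chain hD (fun k => (c (k + 1)).1) (fun k => sInf (c k).1)
    (fun k => i (c k)) (fun k => b (c k))
    (strictMono_nat_of_lt_succ fun k => hgt _ _ (hc k ▸ hmin (k + 1)))
    (fun k => (c k).2.1 (hmin k)) (fun k j hkj => hanti hkj (hmin j))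
    (fun k => hc k ▸ hns (c k))

theorem cell_subset_piece {e : ℕ → ℕ} {σ : ℕ → Bool} {j k : ℕ} (hjk : j < k) :
    cell A B e σ k ⊆ piece A B (σ j) (e j) := by
  induction k with
  | zero => omega
  | succ k ih =>
    rcases (Nat.lt_succ_iff_lt_or_eq.1 hjk) with hj | rfl
    · exact inter_subset_left.trans (ih hj)
    · exact inter_subset_right

theorem independent_of_cell_nonempty {e : ℕ → ℕ} (h : ∀ σ k, (cell A B e σ k).Nonempty) :
    Independent A B e := by
  classical
  intro F G hFG
  obtain ⟨s, hs⟩ := h (fun j => decide (j ∈ F)) ((F ∪ G).sup id + 1)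
  have hlt : ∀ j ∈ F ∪ G, j < (F ∪ G).sup id + 1 :=
    fun j hj => Nat.lt_succ_of_le (Finset.le_sup (f := id) hj)
  refine ⟨s, mem_iInter₂.2 fun j hj => ?_, mem_iInter₂.2 fun j hj => ?_⟩
  · simpa [piece, hj] using cell_subset_piece (hlt j (Finset.mem_union_left G hj)) hs
  · simpa [piece, Finset.disjoint_right.1 hFG hj] using
      cell_subset_piece (hlt j (Finset.mem_union_right F hj)) hs

theorem exists_independent_of_rich {M : Set ℕ} (hM : M.Infinite) (h : Rich A B univ M) :
    ∃ e : ℕ → ℕ, StrictMono e ∧ Independent A B e := by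
  -- A state is an index set together with the finite family of cells built so far, all rich on it.
  let S := {P : Set ℕ × Set (Set α) // P.1.Infinite ∧ P.2.Finite ∧ ∀ D ∈ P.2, Rich A B D P.1}
  have step : ∀ P : S, ∃ n ∈ P.1.1, ∃ P' : S, (∀ m ∈ P'.1.1, n < m) ∧
      P'.1.2 = image2 (fun D b => D ∩ piece A B b n) P.1.2 univ := by
    rintro ⟨⟨M, F⟩, hM, hF, hrich⟩
    have := hF.to_subtype
    obtain ⟨n, hn, M', -, hM', hgt, hrich'⟩ :=
      exists_rich_extension (fun D : F => (D : Set α)) hM fun D => hrich D D.2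
    refine ⟨n, hn, ⟨(M', _), hM', hF.image2 _ finite_univ, ?_⟩, hgt, rfl⟩
    rintro _ ⟨D, hD, b, -, rfl⟩
    exact hrich' ⟨D, hD⟩ b
  choose e he next hgt hnext using step
  let c : ℕ → S := fun k =>
    next^[k] ⟨(M, {univ}), hM, finite_singleton _, by simpa using h⟩
  have hc : ∀ k, c (k + 1) = next (c k) := fun k => Function.iterate_succ_apply' _ _ _
  refine ⟨fun k => e (c k), strictMono_nat_of_lt_succ fun k => hgt _ _ (hc k ▸ he _),
    independent_of_cell_nonempty fun σ k => ?_⟩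
  have hcell : ∀ k, cell A B (fun k => e (c k)) σ k ∈ (c k).1.2 := by
    intro k
    induction k with
    | zero => exact mem_singleton _
    | succ k ih =>
      rw [hc, hnext]
      exact mem_image2_of_mem ih (mem_univ (σ k))
  obtain ⟨s, hs, -⟩ := (c k).2.2.2 _ (hcell k) (c k).1.1 subset_rfl (c k).2.1
  exact ⟨s, hs⟩

theorem exists_convergesOn_or_independent {M : Set ℕ} (hM : M.Infinite) :
    (∃ L ⊆ M, L.Infinite ∧ ConvergesOn A B L) ∨ ∃ e : ℕ → ℕ, StrictMono e ∧ Independent A B e := by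
  refine or_iff_not_imp_left.2 fun hconv => exists_independent_of_rich hM fun L hLM hL => ?_
  obtain ⟨s, hA, hB⟩ : ∃ s, {n ∈ L | s ∈ A n}.Infinite ∧ {n ∈ L | s ∈ B n}.Infinite := by
    simpa [ConvergesOn] using fun h => hconv ⟨L, hLM, hL, h⟩
  exact ⟨s, mem_univ s, hA, hB⟩

end Rosenthal

theorem weaklyCauchy_of_forall_norm_le_one [NormedAddCommGroup X] [NormedSpace ℝ X]
    {x : ℕ → X} (h : ∀ f : X →L[ℝ] ℝ, ‖f‖ ≤ 1 → CauchySeq fun n => f (x n)) :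
    WeaklyCauchy x := by
  intro f
  rcases eq_or_ne f 0 with rfl | hf
  · simpa using cauchySeq_const (0 : ℝ)
  have hscaled := (uniformContinuous_const_smul ‖f‖).comp_cauchySeq
    (h (‖f‖⁻¹ • f) (norm_smul_inv_norm hf).le)
  convert hscaled using 2 with n
  simp [← mul_assoc, mul_inv_cancel₀ (norm_ne_zero_iff.2 hf)]

theorem sum_abs_le_norm_sum_of_separated [NormedAddCommGroup X] [NormedSpace ℝ X]
    {y : ℕ → X} {r s : ℝ}
    (hsep : ∀ F G : Finset ℕ, Disjoint F G → ∃ f : X →L[ℝ] ℝ, ‖f‖ ≤ 1 ∧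
      (∀ j ∈ F, f (y j) < r) ∧ ∀ j ∈ G, s < f (y j))
    (a : ℕ → ℝ) (t : Finset ℕ) :
    (s - r) / 2 * ∑ j ∈ t, |a j| ≤ ‖∑ j ∈ t, a j • y j‖ := by
  classical
  have hdisj := Finset.disjoint_filter_filter_not t t (fun j => a j < 0)
  obtain ⟨f₁, hf₁, hneg₁, hpos₁⟩ := hsep _ _ hdisj
  obtain ⟨f₂, hf₂, hpos₂, hneg₂⟩ := hsep _ _ hdisj.symm
  have hnorm : ‖f₁ - f₂‖ ≤ 2 := (norm_sub_le _ _).trans (by linarith)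
  -- `f₁ - f₂` has the sign of `a j` at `y j`, with absolute value greater than `s - r`.
  have key : ∀ j ∈ t, (s - r) * |a j| ≤ a j * (f₁ - f₂) (y j) := by
    intro j hj
    rw [sub_apply]
    rcases lt_or_ge (a j) 0 with ha | ha
    · have h₁ := hneg₁ j (by simp [hj, ha])
      have h₂ := hneg₂ j (by simp [hj, ha])
      rw [abs_of_neg ha]
      nlinarith
    · have h₁ := hpos₁ j (by simp [hj, ha])
      have h₂ := hpos₂ j (by simp [hj, ha])
      rw [abs_of_nonneg ha]
      nlinarith
  calc (s - r) / 2 * ∑ j ∈ t, |a j| = (∑ j ∈ t, (s - r) * |a j|) / 2 := by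
        rw [← Finset.mul_sum]; ring
    _ ≤ (∑ j ∈ t, a j * (f₁ - f₂) (y j)) / 2 := by linarith [Finset.sum_le_sum key]
    _ = (f₁ - f₂) (∑ j ∈ t, a j • y j) / 2 := by simp [map_sum]
    _ ≤ ‖f₁ - f₂‖ * ‖∑ j ∈ t, a j • y j‖ / 2 := by
        gcongr; exact (le_abs_self _).trans ((f₁ - f₂).le_opNorm _)
    _ ≤ ‖∑ j ∈ t, a j • y j‖ := by nlinarith [norm_nonneg (∑ j ∈ t, a j • y j)]

theorem containsL1_of_sum_abs_le_norm_sum [NormedAddCommGroup X] [NormedSpace ℝ X]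
    [CompleteSpace X] {y : ℕ → X} (hy : ∀ j, ‖y j‖ ≤ 1) {c : ℝ} (hc : 0 < c)
    (hlow : ∀ (a : ℕ → ℝ) (t : Finset ℕ), c * ∑ j ∈ t, |a j| ≤ ‖∑ j ∈ t, a j • y j‖) :
    ContainsL1 X := by
  let S : lpS 1 →L[ℝ] X := (lp.tsumCLM ℝ ℕ X).comp
    (lp.mapCLM 1 (fun j => ContinuousLinearMap.toSpanSingleton ℝ (y j)) zero_le_one
      fun j => by simpa using hy j)
  refine ⟨S, c, hc, fun v => ?_⟩
  have hv : HasSum (fun j => |v j|) ‖v‖ := by simpa using lp.hasSum_norm (by norm_num) v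
  have hS : HasSum (fun j => v j • y j) (S v) := by
    have hsum : Summable fun j => v j • y j :=
      hv.summable.of_norm_bounded fun j => by
        simpa [norm_smul] using mul_le_of_le_one_right (abs_nonneg _) (hy j)
    simpa [S] using hsum.hasSum
  exact le_of_tendsto_of_tendsto' (hv.tendsto_sum_nat.const_mul c) hS.tendsto_sum_nat.norm
    fun n => hlow v _

namespace Rosenthal

/-- The pairs `(below x r n, above x s n)` live in the dual unit ball, so that a point of an
independent cell is a functional of norm at most one. -/
def below [NormedAddCommGroup X] [NormedSpace ℝ X] (x : ℕ → X) (r : ℝ) (n : ℕ) :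
    Set (closedBall (0 : X →L[ℝ] ℝ) 1) :=
  {f | (f : X →L[ℝ] ℝ) (x n) < r}

def above [NormedAddCommGroup X] [NormedSpace ℝ X] (x : ℕ → X) (s : ℝ) (n : ℕ) :
    Set (closedBall (0 : X →L[ℝ] ℝ) 1) :=
  {f | s < (f : X →L[ℝ] ℝ) (x n)}

variable [NormedAddCommGroup X] [NormedSpace ℝ X] [CompleteSpace X]

theorem exists_convergesOn_below_above (hX : ¬ ContainsL1 X) {x : ℕ → X}
    (hx : ∀ n, ‖x n‖ ≤ 1) {r s : ℝ} (hrs : r < s) {M : Set ℕ} (hM : M.Infinite) :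
    ∃ L ⊆ M, L.Infinite ∧ ConvergesOn (below x r) (above x s) L := by
  refine (exists_convergesOn_or_independent hM).resolve_right ?_
  rintro ⟨e, -, hind⟩
  refine hX (containsL1_of_sum_abs_le_norm_sum (y := x ∘ e) (fun j => hx _)
    (half_pos (sub_pos.2 hrs)) (sum_abs_le_norm_sum_of_separated fun F G hFG => ?_))
  obtain ⟨⟨f, hf⟩, hfF, hfG⟩ := hind F G hFG
  exact ⟨f, mem_closedBall_zero_iff.1 hf, fun j hj => Set.mem_iInter₂.1 hfF j hj,
    fun j hj => Set.mem_iInter₂.1 hfG j hj⟩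

theorem exists_strictMono_weaklyCauchy (hX : ¬ ContainsL1 X) {x : ℕ → X}
    (hx : ∀ n, ‖x n‖ ≤ 1) : ∃ φ : ℕ → ℕ, StrictMono φ ∧ WeaklyCauchy (x ∘ φ) := by
  obtain ⟨φ, hφ, hconv⟩ := exists_strictMono_forall_of_sdiff_finite
    (fun q : {q : ℚ × ℚ // q.1 < q.2} => ConvergesOn (below x q.1.1) (above x q.1.2))
    (fun _ _ _ h => h.of_sdiff_finite)
    (fun q _ hM => exists_convergesOn_below_above hX hx (by exact_mod_cast q.2) hM)
  refine ⟨φ, hφ, weaklyCauchy_of_forall_norm_le_one fun f hf =>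
    cauchySeq_of_forall_rat_finite (C := 1) (fun n => ?_) fun r s hrs => ?_⟩
  · exact (f.le_opNorm _).trans (mul_le_one₀ hf (norm_nonneg _) (hx _))
  · exact (hconv ⟨(r, s), hrs⟩).comp_range hφ.injective ⟨f, mem_closedBall_zero_iff.2 hf⟩

end Rosenthal

section WeakTopology

variable [NormedAddCommGroup X] [NormedSpace ℝ X]

theorem WeaklyNull.relWeaklyCompact_insert_zero {z : ℕ → X} (hz : WeaklyNull z) :
    RelWeaklyCompact (insert (0 : X) (Set.range z)) := by
  have hinj : Function.Injective (topDualPairing ℝ X).flip :=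
    separatingDual_iff_injective.1 inferInstance
  have hlim : Tendsto (fun n => toWeakSpaceCLM ℝ X (z n)) atTop (𝓝 (toWeakSpaceCLM ℝ X 0)) :=
    (WeakBilin.tendsto_iff_forall_eval_tendsto _ hinj).2 fun f => by
      show Tendsto (fun n => f (z n)) atTop (𝓝 (f 0))
      simpa using hz f
  have hK : IsCompact (insert (toWeakSpaceCLM ℝ X 0) (Set.range (toWeakSpaceCLM ℝ X ∘ z))) :=
    hlim.isCompact_insert_range
  rw [RelWeaklyCompact, Set.image_insert_eq, ← Set.range_comp, hK.isClosed.closure_eq]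
  exact hK

theorem WeaklyNull.comp_clm {Y : Type*} [NormedAddCommGroup Y] [NormedSpace ℝ Y] {z : ℕ → X}
    (hz : WeaklyNull z) (T : X →L[ℝ] Y) : WeaklyNull (T ∘ z) :=
  fun f => hz (f.comp T)

theorem WeaklyNull.tendsto_zero_of_isCompact_closure {y : ℕ → X} (hy : WeaklyNull y)
    (hc : IsCompact (closure (Set.range y))) : Tendsto y atTop (𝓝 0) := by
  refine tendsto_of_subseq_tendsto fun ns hns => ?_
  obtain ⟨w, -, ψ, hψ, hw⟩ := hc.tendsto_subseq fun k => subset_closure ⟨ns k, rfl⟩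
  suffices w = 0 from ⟨ψ, this ▸ hw⟩
  refine SeparatingDual.eq_zero_of_forall_dual_eq_zero (R := ℝ) fun f => ?_
  exact tendsto_nhds_unique ((f.continuous.tendsto w).comp hw)
    ((hy f).comp (hns.comp hψ.tendsto_atTop))

variable {p : ENNReal} [Fact (1 ≤ p)]

theorem CoarsePDPstar.tendsto_zero_of_weaklyNull (hdp : CoarsePDPstar p X) (T : X →L[ℝ] lpS p)
    {z : ℕ → X} (hz : WeaklyNull z) : Tendsto (fun n => T (z n)) atTop (𝓝 0) := by
  refine (hz.comp_clm T).tendsto_zero_of_isCompact_closure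
    ((hdp _ hz.relWeaklyCompact_insert_zero T).of_isClosed_subset isClosed_closure ?_)
  exact closure_mono (Set.range_subset_iff.2 fun n => ⟨z n, Set.mem_insert_of_mem _ ⟨n, rfl⟩, rfl⟩)

theorem CoarsePDPstar.cauchySeq_of_weaklyCauchy (hdp : CoarsePDPstar p X) (T : X →L[ℝ] lpS p)
    {x : ℕ → X} (hx : WeaklyCauchy x) : CauchySeq fun n => T (x n) := by
  rw [cauchySeq_iff_tendsto_dist_atTop_0]
  refine tendsto_of_seq_tendsto fun ns hns => ?_
  rw [← prod_atTop_atTop_eq] at hns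
  have hnull : WeaklyNull fun k => x (ns k).1 - x (ns k).2 := fun f => by
    obtain ⟨l, hl⟩ := cauchySeq_tendsto_of_complete (hx f)
    simpa using ((hl.comp (tendsto_fst.comp hns)).sub (hl.comp (tendsto_snd.comp hns)))
  simpa [Function.comp_def, dist_eq_norm] using (hdp.tendsto_zero_of_weaklyNull T hnull).norm

end WeakTopology

theorem stmt14_general (p : ENNReal) [Fact (1 ≤ p)]
    [NormedAddCommGroup X] [NormedSpace ℝ X] [CompleteSpace X]
    (hX : ¬ ContainsL1 X) (hdp : CoarsePDPstar p X) :
    CoarsePLimited p (closedBall (0 : X) 1) := by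
  intro T
  refine (totallyBounded_of_forall_exists_cauchySeq ?_).closure.isCompact_of_isClosed
    isClosed_closure
  intro u hu
  choose x hx hxu using hu
  obtain rfl : (fun n => T (x n)) = u := funext hxu
  obtain ⟨φ, hφ, hwc⟩ := Rosenthal.exists_strictMono_weaklyCauchy hX
    fun n => mem_closedBall_zero_iff.1 (hx n)
  exact ⟨φ, hφ, hdp.cauchySeq_of_weaklyCauchy T hwc⟩

theorem stmt14 (p : ENNReal) [Fact (1 ≤ p)] (hp : p ≠ ⊤)
    [NormedAddCommGroup X] [NormedSpace ℝ X] [CompleteSpace X]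
    (hX : ¬ ContainsL1 X) (hdp : CoarsePDPstar p X) :
    CoarsePLimited p (closedBall (0 : X) 1) :=
  stmt14_general p hX hdp
end
end

section
/- The set of coarse p-limited operators from X to Y is a closed subspace of L(X;Y) (closed under norm limits), and is a two-sided operator ideal: if T : X → Y is coarse p-limited, S : Y → Z and R : W → X are bounded, then S∘T and T∘R are coarse p-limited. -/
open Filter Topology Metric

noncomputable section

variable {W X Y Z : Type*}

/-! Composing with a bounded `U : Y → ℓ_p`, an operator `T` is coarse `p`-limited exactly when
every `U ∘ T` is a compact operator. The coarse `p`-limited operators are therefore the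
intersection, over all `U`, of the preimages of the compact operators under `T ↦ U ∘ T`;
since the compact operators into the Banach space `ℓ_p` form a closed subspace and
`T ↦ U ∘ T` is continuous and linear, so do the coarse `p`-limited operators. -/

section

variable {p : ENNReal} [Fact (1 ≤ p)]
  [NormedAddCommGroup W] [NormedSpace ℝ W] [NormedAddCommGroup X] [NormedSpace ℝ X]
  [NormedAddCommGroup Y] [NormedSpace ℝ Y] [NormedAddCommGroup Z] [NormedSpace ℝ Z]

theorem coarsePLimOp_iff_isCompactOperator_comp {T : X →L[ℝ] Y} :
    CoarsePLimOp p T ↔ ∀ U : Y →L[ℝ] lpS p, IsCompactOperator (U.comp T) := by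
  refine forall_congr' fun U => ?_
  rw [Set.image_image]
  exact (isCompactOperator_iff_isCompact_closure_image_closedBall
    ((U.comp T) : X →ₗ[ℝ] lpS p) one_pos).symm

variable (X Y p) in
def coarsePLimOps : Submodule ℝ (X →L[ℝ] Y) :=
  ⨅ U : Y →L[ℝ] lpS p,
    (compactOperator (RingHom.id ℝ) X (lpS p)).comap
      (ContinuousLinearMap.compL ℝ X Y (lpS p) U : (X →L[ℝ] Y) →ₗ[ℝ] X →L[ℝ] lpS p)

theorem mem_coarsePLimOps {T : X →L[ℝ] Y} : T ∈ coarsePLimOps X Y p ↔ CoarsePLimOp p T := by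
  rw [coarsePLimOp_iff_isCompactOperator_comp, coarsePLimOps, Submodule.mem_iInf]
  rfl

theorem isClosed_coarsePLimOps : IsClosed (coarsePLimOps X Y p : Set (X →L[ℝ] Y)) := by
  rw [coarsePLimOps, Submodule.coe_iInf]
  exact isClosed_iInter fun U =>
    isClosed_setOfPred_isCompactOperator.preimage
      (ContinuousLinearMap.compL ℝ X Y (lpS p) U).continuous

theorem CoarsePLimOp.clm_comp {T : X →L[ℝ] Y} (hT : CoarsePLimOp p T) (S : Y →L[ℝ] Z) :
    CoarsePLimOp p (S.comp T) := by
  rw [coarsePLimOp_iff_isCompactOperator_comp] at hT ⊢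
  exact fun U => hT (U.comp S)

theorem CoarsePLimOp.comp_clm {T : X →L[ℝ] Y} (hT : CoarsePLimOp p T) (R : W →L[ℝ] X) :
    CoarsePLimOp p (T.comp R) := by
  rw [coarsePLimOp_iff_isCompactOperator_comp] at hT ⊢
  exact fun U => (hT U).comp_clm R

end

theorem stmt17_general (p : ENNReal) [Fact (1 ≤ p)]
    [NormedAddCommGroup W] [NormedSpace ℝ W]
    [NormedAddCommGroup X] [NormedSpace ℝ X]
    [NormedAddCommGroup Y] [NormedSpace ℝ Y]
    [NormedAddCommGroup Z] [NormedSpace ℝ Z] :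
    (CoarsePLimOp p (0 : X →L[ℝ] Y)) ∧
    (∀ T S : X →L[ℝ] Y, CoarsePLimOp p T → CoarsePLimOp p S → CoarsePLimOp p (T + S)) ∧
    (∀ (c : ℝ) (T : X →L[ℝ] Y), CoarsePLimOp p T → CoarsePLimOp p (c • T)) ∧
    (∀ (T : ℕ → X →L[ℝ] Y) (T₀ : X →L[ℝ] Y), (∀ n, CoarsePLimOp p (T n)) →
      Tendsto T atTop (𝓝 T₀) → CoarsePLimOp p T₀) ∧
    (∀ (T : X →L[ℝ] Y) (S : Y →L[ℝ] Z), CoarsePLimOp p T → CoarsePLimOp p (S.comp T)) ∧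
    (∀ (T : X →L[ℝ] Y) (R : W →L[ℝ] X), CoarsePLimOp p T → CoarsePLimOp p (T.comp R)) := by
  refine ⟨?_, ?_, ?_, ?_, fun T S hT => hT.clm_comp S, fun T R hT => hT.comp_clm R⟩ <;>
    simp only [← mem_coarsePLimOps (p := p)]
  · exact zero_mem _
  · exact fun _ _ => add_mem
  · exact fun c _ => Submodule.smul_mem _ c
  · exact fun T T₀ hT hlim => isClosed_coarsePLimOps.mem_of_tendsto hlim (.of_forall hT)

theorem stmt17 (p : ENNReal) [Fact (1 ≤ p)] (hp : p ≠ ⊤)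
    [NormedAddCommGroup W] [NormedSpace ℝ W] [CompleteSpace W]
    [NormedAddCommGroup X] [NormedSpace ℝ X] [CompleteSpace X]
    [NormedAddCommGroup Y] [NormedSpace ℝ Y] [CompleteSpace Y]
    [NormedAddCommGroup Z] [NormedSpace ℝ Z] [CompleteSpace Z] :
    (CoarsePLimOp p (0 : X →L[ℝ] Y)) ∧
    (∀ T S : X →L[ℝ] Y, CoarsePLimOp p T → CoarsePLimOp p S → CoarsePLimOp p (T + S)) ∧
    (∀ (c : ℝ) (T : X →L[ℝ] Y), CoarsePLimOp p T → CoarsePLimOp p (c • T)) ∧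
    (∀ (T : ℕ → X →L[ℝ] Y) (T₀ : X →L[ℝ] Y), (∀ n, CoarsePLimOp p (T n)) →
      Tendsto T atTop (𝓝 T₀) → CoarsePLimOp p T₀) ∧
    (∀ (T : X →L[ℝ] Y) (S : Y →L[ℝ] Z), CoarsePLimOp p T → CoarsePLimOp p (S.comp T)) ∧
    (∀ (T : X →L[ℝ] Y) (R : W →L[ℝ] X), CoarsePLimOp p T → CoarsePLimOp p (T.comp R)) :=
  stmt17_general p
end
end
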